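/- Let n ≥ 2 and ρ = exp(2πi/n). (a) If s, s′ ∈ ℂ are nonzero and s·ρᵏ ≠ s′·ρˡ for all k, l ∈ {0,…,n−1}, then ∑_{k=0}^{n−1} ∑_{l=0}^{n−1} (s·ρᵏ − s′·ρˡ)/|s·ρᵏ − s′·ρˡ|² = 0. (b) For every nonzero s ∈ ℂ, ∑_{k=0}^{n−1} ∑_{l∈{0,…,n−1}, l≠k} (s·ρᵏ − s·ρˡ)/|s·ρᵏ − s·ρˡ|² = 0. -/

import Mathlib

open Finset

/-- **Vanishing of the interaction sums between two concentric regular polygons.**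
(a) For two regular `n`-gons `s ρᵏ` and `s' ρˡ` with no common point, the double sum
`∑ₖ ∑ₗ (s ρᵏ − s' ρˡ)/|s ρᵏ − s' ρˡ|²` vanishes.
(b) For a single regular `n`-gon, `∑ₖ ∑_{l ≠ k} (s ρᵏ − s ρˡ)/|s ρᵏ − s ρˡ|²` vanishes. -/
theorem polygon_interaction_sums_vanish
    (n : ℕ) (hn : 2 ≤ n)
    (ρ : ℂ) (hρ : ρ = Complex.exp (2 * Real.pi * Complex.I / n)) :
    (∀ s s' : ℂ, s ≠ 0 → s' ≠ 0 →
      (∀ k l : ℕ, k < n → l < n → s * ρ ^ k ≠ s' * ρ ^ l) →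
      ∑ k ∈ Finset.range n, ∑ l ∈ Finset.range n,
        (s * ρ ^ k - s' * ρ ^ l) /
          (((‖s * ρ ^ k - s' * ρ ^ l‖ : ℝ) : ℂ) ^ 2) = 0)
    ∧ (∀ s : ℂ, s ≠ 0 →
      ∑ k ∈ Finset.range n, ∑ l ∈ (Finset.range n).erase k,
        (s * ρ ^ k - s * ρ ^ l) /
          (((‖s * ρ ^ k - s * ρ ^ l‖ : ℝ) : ℂ) ^ 2) = 0) := by
  haveI : NeZero n := ⟨by omega⟩
  have hn0 : (n : ℂ) ≠ 0 := Nat.cast_ne_zero.mpr (by omega)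
  have hprim : IsPrimitiveRoot ρ n := hρ ▸ Complex.isPrimitiveRoot_exp n (by omega)
  have hρn : ρ ^ n = 1 := hprim.pow_eq_one
  have hρ1 : ρ ≠ 1 := hprim.ne_one (by omega)
  have habsρ : ‖ρ‖ = 1 := by
    rw [hρ]
    have : 2 * (Real.pi : ℂ) * Complex.I / n = ((2 * Real.pi / n : ℝ) : ℂ) * Complex.I := by
      push_cast; ring
    rw [this, Complex.norm_exp_ofReal_mul_I]
  have hpow : ∀ m : ℕ, ρ ^ (m % n) = ρ ^ m := fun m => (pow_eq_pow_mod m hρn).symm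
  constructor
  · intro s s' hs hs' hne
    set F : ℕ → ℕ → ℂ := fun k l => (s * ρ ^ k - s' * ρ ^ l) /
          (((‖s * ρ ^ k - s' * ρ ^ l‖ : ℝ) : ℂ) ^ 2) with hF
    have key : ∀ k l : ℕ, F (k + 1) (l + 1) = ρ * F k l := by
      intro k l
      have hnum : s * ρ ^ (k + 1) - s' * ρ ^ (l + 1) = ρ * (s * ρ ^ k - s' * ρ ^ l) := by
        ring
      simp only [hF, hnum, norm_mul, habsρ, one_mul, mul_div_assoc]
    have hsum : (∑ k ∈ Finset.range n, ∑ l ∈ Finset.range n, F k l)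
        = ∑ i : Fin n, ∑ j : Fin n, F i j := by
      rw [← Fin.sum_univ_eq_sum_range]
      exact Finset.sum_congr rfl fun i _ => (Fin.sum_univ_eq_sum_range _ _).symm
    have hrot : ρ * (∑ i : Fin n, ∑ j : Fin n, F i j) = ∑ i : Fin n, ∑ j : Fin n, F i j := by
      rw [Finset.mul_sum]
      simp only [Finset.mul_sum]
      calc (∑ i : Fin n, ∑ j : Fin n, ρ * F i j)
          = ∑ i : Fin n, ∑ j : Fin n, F (i + 1 : Fin n) (j + 1 : Fin n) := by
            refine Finset.sum_congr rfl fun i _ => Finset.sum_congr rfl fun j _ => ?_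
            have hone : ((1 : Fin n) : ℕ) = 1 := by
              rw [Fin.val_one']; exact Nat.one_mod_eq_one.mpr (by omega)
            have h1 : ((i + 1 : Fin n) : ℕ) = (↑i + 1) % n := by rw [Fin.val_add, hone]
            have h2 : ((j + 1 : Fin n) : ℕ) = (↑j + 1) % n := by rw [Fin.val_add, hone]
            rw [← key i j]
            simp only [hF, h1, h2, hpow]
        _ = ∑ i : Fin n, ∑ j : Fin n, F i j := by
            rw [← Equiv.sum_comp (Equiv.addRight (1 : Fin n)) (fun i => ∑ j : Fin n, F ↑i ↑j)]
            simp only [Equiv.coe_addRight]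
            refine Finset.sum_congr rfl fun i _ => ?_
            rw [← Equiv.sum_comp (Equiv.addRight (1 : Fin n)) (fun j => F (↑(i + 1)) ↑j)]
            simp only [Equiv.coe_addRight]
    rw [hsum]
    have : (ρ - 1) * (∑ i : Fin n, ∑ j : Fin n, F i j) = 0 := by
      rw [sub_mul, hrot, one_mul, sub_self]
    rcases mul_eq_zero.mp this with h | h
    · exact absurd (sub_eq_zero.mp h) hρ1
    · exact h
  · intro s hs
    set f : ℕ → ℕ → ℂ := fun k l => (s * ρ ^ k - s * ρ ^ l) /
          (((‖s * ρ ^ k - s * ρ ^ l‖ : ℝ) : ℂ) ^ 2) with hf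
    have hdiag : ∀ k, f k k = 0 := by intro k; simp [hf]
    have hanti : ∀ k l, f l k = - f k l := by
      intro k l
      simp only [hf]
      rw [show s * ρ ^ l - s * ρ ^ k = -(s * ρ ^ k - s * ρ ^ l) by ring, norm_neg,
        neg_div]
    have hT : (∑ k ∈ Finset.range n, ∑ l ∈ (Finset.range n).erase k, f k l)
        = ∑ k ∈ Finset.range n, ∑ l ∈ Finset.range n, f k l :=
      Finset.sum_congr rfl fun k _ => Finset.sum_erase _ (hdiag k)
    rw [hT]
    set T := ∑ k ∈ Finset.range n, ∑ l ∈ Finset.range n, f k l with hTdef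
    have h1 : T = ∑ k ∈ Finset.range n, ∑ l ∈ Finset.range n, f l k := Finset.sum_comm
    have h2 : T + T = 0 := by
      nth_rewrite 1 [h1]
      rw [← Finset.sum_add_distrib]
      rw [show (∑ k ∈ Finset.range n, ((∑ l ∈ Finset.range n, f l k) + ∑ l ∈ Finset.range n, f k l))
          = ∑ k ∈ Finset.range n, ∑ l ∈ Finset.range n, (f l k + f k l) from
        Finset.sum_congr rfl fun k _ => (Finset.sum_add_distrib).symm]
      refine Finset.sum_eq_zero fun k _ => Finset.sum_eq_zero fun l _ => ?_
      rw [hanti k l]; ring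
    exact add_self_eq_zero.mp h2
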